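/- If a countable group Γ is the union of an increasing sequence Γ₀ ≤ Γ₁ ≤ Γ₂ ≤ ⋯ of subgroups each of which is approximately treeable, then Γ is approximately treeable. -/

import Mathlib

open MeasureTheory

namespace Stmt8

/-- The undirected graph on `Γ` underlying a set `F ⊆ Γ × Γ` of directed edges. -/
def graphOf {Γ : Type*} (F : Γ × Γ → Bool) : SimpleGraph Γ where
  Adj a b := a ≠ b ∧ (F (a, b) = true ∨ F (b, a) = true)
  symm := ⟨fun _ _ h => ⟨h.1.symm, h.2.symm⟩⟩
  loopless := ⟨fun _ h => h.1 rfl⟩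

/-- `F` is a directed forest on `Γ`: `F ∩ F̄ = ∅` and `F ∪ F̄` has no cycles. -/
def IsDirForest {Γ : Type*} (F : Γ × Γ → Bool) : Prop :=
  (∀ q : Γ × Γ, ¬(F q = true ∧ F (q.2, q.1) = true)) ∧ (graphOf F).IsAcyclic

/-- The diagonal action of `Γ` on subsets of `Γ × Γ`. -/
def dAct {Γ : Type*} [Group Γ] (γ : Γ) (F : Γ × Γ → Bool) : Γ × Γ → Bool :=
  fun q => F (γ⁻¹ * q.1, γ⁻¹ * q.2)

/-- A countable group `Γ` is approximately treeable if for every finite `H ⊆ Γ` and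
`ε > 0` there is a Borel probability measure on the space of directed forests on `Γ`,
invariant under the diagonal action, giving measure `< ε` to the set of forests `F`
with `H × H ⊄ E_F`.  (The measure is realized as an invariant Borel probability measure
on `2^(Γ × Γ)` concentrated on the set of directed forests.) -/
def ApproxTreeable (Γ : Type*) [Group Γ] : Prop :=
  ∀ (H : Finset Γ) (ε : ℝ), 0 < ε →
    ∃ μ : Measure ((Γ × Γ) → Bool), IsProbabilityMeasure μ ∧
      (∀ γ : Γ, MeasurePreserving (dAct γ) μ μ) ∧
      μ {F | IsDirForest F} = 1 ∧
      μ {F | IsDirForest F ∧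
        ¬ ∀ a ∈ H, ∀ b ∈ H, (graphOf F).Reachable a b} < ENNReal.ofReal ε

/-!
Given `H` and `ε`, all of `H` lies in one `Γₙ =: Λ`. Take a `Λ`-invariant random forest `F` on `Λ`
that connects (a left translate of) `H` with probability `> 1 - ε`, and put independent copies
of it on all left cosets `q.out * Λ`. The union is a random forest on `Γ` whose component structure
on `Λ` is that of `F`. It is `Γ`-invariant: `γ` permutes the cosets and, on each coset, acts by
an element of `Λ` (the cocycle of the section `Quotient.out`), under which `F` is invariant.
-/

open Set SimpleGraph

instance {V : Type*} [Countable V] {G : SimpleGraph V} {u v : V} : Countable (G.Walk u v) :=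
  Walk.support_injective.countable

section MeasurableGraphs

variable {α V : Type*} [MeasurableSpace α] {G : α → SimpleGraph V}

/-- For countable `V` there are only countably many walks in `⊤`. -/
lemma nonempty_walk_iff_exists_walk_top (H : SimpleGraph V) (u v : V) :
    Nonempty (H.Walk u v) ↔ ∃ w : (⊤ : SimpleGraph V).Walk u v, ∀ e ∈ w.edges, e ∈ H.edgeSet :=
  ⟨fun ⟨w⟩ => ⟨w.mapLe le_top, by simpa [Walk.edges_mapLe_eq_edges] using w.edges_subset_edgeSet⟩,
    fun ⟨w, hw⟩ => ⟨w.transfer H hw⟩⟩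

lemma isAcyclic_iff_forall_isCycle_top (H : SimpleGraph V) :
    H.IsAcyclic ↔ ∀ (v : V) (c : (⊤ : SimpleGraph V).Walk v v), c.IsCycle →
      ¬ ∀ e ∈ c.edges, e ∈ H.edgeSet :=
  ⟨fun h _ c hc hcH => h (c.transfer H hcH) (hc.transfer hcH),
    fun h _ c hc => h _ (c.mapLe le_top) (hc.mapLe le_top)
      (by simpa [Walk.edges_mapLe_eq_edges] using c.edges_subset_edgeSet)⟩

variable [Countable V] (hG : ∀ u v, Measurable fun a => (G a).Adj u v)
include hG

lemma measurable_forall_mem_edges {u v : V} (w : (⊤ : SimpleGraph V).Walk u v) :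
    Measurable fun a => ∀ e ∈ w.edges, e ∈ (G a).edgeSet :=
  .forall fun e => measurable_const.imp (Sym2.ind (fun u v => hG u v) e)

lemma measurable_reachable (u v : V) : Measurable fun a => (G a).Reachable u v := by
  simp only [Reachable, nonempty_walk_iff_exists_walk_top]
  exact .exists fun w => measurable_forall_mem_edges hG w

lemma measurable_isAcyclic : Measurable fun a => (G a).IsAcyclic := by
  simp only [isAcyclic_iff_forall_isCycle_top]
  exact .forall fun v => .forall fun c => measurable_const.imp (measurable_forall_mem_edges hG c).not

end MeasurableGraphs

section MeasurableForests

variable {V : Type*}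

lemma measurable_apply_eq_true (q : V × V) : Measurable fun F : V × V → Bool => F q = true :=
  (Measurable.of_discrete (f := fun b : Bool => b = true)).comp (measurable_pi_apply q)

lemma measurable_graphOf_adj (u v : V) : Measurable fun F : V × V → Bool => (graphOf F).Adj u v :=
  measurable_const.and ((measurable_apply_eq_true _).or (measurable_apply_eq_true _))

variable [Countable V]

lemma measurable_isDirForest : Measurable fun F : V × V → Bool => IsDirForest F :=
  (Measurable.forall fun q =>
    ((measurable_apply_eq_true q).and (measurable_apply_eq_true _)).not).and
    (measurable_isAcyclic measurable_graphOf_adj)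

lemma measurable_isDirForest_and_not_reachable (H : Finset V) :
    Measurable fun F : V × V → Bool => IsDirForest F ∧
      ¬ ∀ a ∈ H, ∀ b ∈ H, (graphOf F).Reachable a b :=
  measurable_isDirForest.and <| Measurable.not <| .forall fun a => measurable_const.imp <|
    .forall fun b => measurable_const.imp <| measurable_reachable measurable_graphOf_adj a b

end MeasurableForests

lemma measurePreserving_infinitePi_comp_equiv {ι C : Type*} [MeasurableSpace C] (μ : Measure C)
    [IsProbabilityMeasure μ] (e : ι ≃ ι) {g : ι → C → C} (hg : ∀ i, MeasurePreserving (g i) μ μ) :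
    MeasurePreserving (fun x i => g i (x (e i)))
      (Measure.infinitePi fun _ : ι => μ) (Measure.infinitePi fun _ : ι => μ) := by
  have hperm : MeasurePreserving (fun (x : ι → C) i => x (e i))
      (Measure.infinitePi fun _ : ι => μ) (Measure.infinitePi fun _ : ι => μ) := by
    have : (fun (x : ι → C) i => x (e i)) = MeasurableEquiv.piCongrLeft (fun _ => C) e.symm := by
      ext x i; simp [MeasurableEquiv.coe_piCongrLeft, Equiv.piCongrLeft_apply]
    exact ⟨by fun_prop, this ▸ Measure.infinitePi_map_piCongrLeft (fun _ => μ) e.symm⟩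
  have hmap : MeasurePreserving (fun (x : ι → C) i => g i (x i))
      (Measure.infinitePi fun _ : ι => μ) (Measure.infinitePi fun _ : ι => μ) :=
    ⟨measurable_pi_lambda _ fun i => (hg i).measurable.comp (measurable_pi_apply i), by
      simp_rw [Measure.infinitePi_map_pi _ fun i => (hg i).measurable, (hg _).map_eq]⟩
  exact hmap.comp hperm

lemma Walk.apply_eq_of_mem_support {V ι : Type*} {G : SimpleGraph V} {k : V → ι}
    (hk : ∀ u v, G.Adj u v → k u = k v) {a b : V} (w : G.Walk a b) : ∀ u ∈ w.support, k u = k a := by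
  induction w with
  | nil => simp
  | cons hadj w ih =>
    intro u hu
    rcases List.mem_cons.1 hu with rfl | hu
    · rfl
    · exact (ih u hu).trans (hk _ _ hadj).symm

lemma isAcyclic_of_isAcyclic_induce_fiber {V ι : Type*} {G : SimpleGraph V} (k : V → ι)
    (hk : ∀ u v, G.Adj u v → k u = k v) (h : ∀ i, (G.induce {v | k v = i}).IsAcyclic) :
    G.IsAcyclic := fun v c hc =>
  h (k v) (c.induce {w | k w = k v} (Walk.apply_eq_of_mem_support hk c)) <|
    (Walk.isCycle_map_iff_of_injective (Embedding.induce (G := G) _).injective).1 <| by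
      rwa [Walk.map_induce]

section Cosets

variable {Γ : Type*} [Group Γ] (Λ : Subgroup Γ)

noncomputable def coord (a : Γ) : Λ :=
  ⟨(a : Γ ⧸ Λ).out⁻¹ * a, by
    rw [← QuotientGroup.eq, QuotientGroup.out_eq']⟩

lemma out_mul_coord (a : Γ) : (a : Γ ⧸ Λ).out * coord Λ a = a := by
  simp [coord]

lemma eq_of_coord_eq {a b : Γ} (h : (a : Γ ⧸ Λ) = b) (h' : coord Λ a = coord Λ b) : a = b := by
  rw [← out_mul_coord Λ a, ← out_mul_coord Λ b, h, h']

lemma mk_out_mul (q : Γ ⧸ Λ) (v : Λ) : ((q.out * v : Γ) : Γ ⧸ Λ) = q := by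
  rw [QuotientGroup.mk_mul_of_mem _ v.2, QuotientGroup.out_eq']

lemma coord_out_mul (q : Γ ⧸ Λ) (v : Λ) : coord Λ (q.out * v) = v :=
  Subtype.ext <| by simp [coord]

noncomputable def cocycle (γ : Γ) (q : Γ ⧸ Λ) : Λ :=
  ⟨(γ⁻¹ • q).out⁻¹ * γ⁻¹ * q.out, by
    rw [mul_assoc, ← QuotientGroup.eq, QuotientGroup.out_eq', ← smul_eq_mul,
      ← MulAction.Quotient.smul_mk, QuotientGroup.out_eq']⟩

lemma mk_inv_mul (γ a : Γ) : ((γ⁻¹ * a : Γ) : Γ ⧸ Λ) = γ⁻¹ • (a : Γ ⧸ Λ) := by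
  rw [MulAction.Quotient.smul_mk, smul_eq_mul]

lemma coord_inv_mul (γ a : Γ) : coord Λ (γ⁻¹ * a) = cocycle Λ γ a * coord Λ a :=
  Subtype.ext <| by
    simp only [coord, cocycle, Subgroup.coe_mul, MulAction.Quotient.smul_mk, smul_eq_mul]
    group

variable {Λ}

open Classical in
/-- Transports the forest `x q` on `Λ` to the coset `q` along `v ↦ q.out * v`. -/
noncomputable def spread (x : Γ ⧸ Λ → Λ × Λ → Bool) : Γ × Γ → Bool :=
  fun p => if (p.1 : Γ ⧸ Λ) = p.2 then x p.1 (coord Λ p.1, coord Λ p.2) else false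

lemma spread_eq_true_iff {x : Γ ⧸ Λ → Λ × Λ → Bool} {a b : Γ} :
    spread x (a, b) = true ↔ (a : Γ ⧸ Λ) = b ∧ x a (coord Λ a, coord Λ b) = true := by
  simp [spread]

lemma spread_out_mul (x : Γ ⧸ Λ → Λ × Λ → Bool) (q : Γ ⧸ Λ) (v w : Λ) :
    spread x (q.out * v, q.out * w) = x q (v, w) := by
  simp [spread, coord_out_mul]

lemma measurable_spread : Measurable (spread (Λ := Λ)) := by
  refine measurable_pi_lambda _ fun p => ?_
  by_cases h : (p.1 : Γ ⧸ Λ) = p.2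
  · simp only [spread, h, ↓reduceIte]
    fun_prop
  · simp only [spread, h, ↓reduceIte]
    exact measurable_const

lemma dAct_spread (γ : Γ) (x : Γ ⧸ Λ → Λ × Λ → Bool) :
    dAct γ (spread x) = spread fun q => dAct (cocycle Λ γ q)⁻¹ (x (γ⁻¹ • q)) := by
  funext ⟨a, b⟩
  by_cases h : (a : Γ ⧸ Λ) = b <;>
    simp only [dAct, spread, inv_inv, coord_inv_mul, mk_inv_mul, smul_left_cancel_iff, h,
      ↓reduceIte]

lemma isDirForest_spread {x : Γ ⧸ Λ → Λ × Λ → Bool} (hx : ∀ q, IsDirForest (x q)) :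
    IsDirForest (spread x) := by
  constructor
  · rintro ⟨a, b⟩ ⟨hab, hba⟩
    obtain ⟨hq, hab⟩ := spread_eq_true_iff.1 hab
    obtain ⟨-, hba⟩ := spread_eq_true_iff.1 hba
    exact (hx a).1 _ ⟨hab, hq ▸ hba⟩
  · refine isAcyclic_of_isAcyclic_induce_fiber (fun a : Γ => (a : Γ ⧸ Λ)) ?_ fun q => ?_
    · rintro a b ⟨-, hab | hba⟩
      · exact (spread_eq_true_iff.1 hab).1
      · exact (spread_eq_true_iff.1 hba).1.symm
    · refine IsAcyclic.comap ⟨fun a => coord Λ a, ?_⟩ ?_ (hx q).2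
      · rintro ⟨a, rfl⟩ ⟨b, hb⟩ ⟨hne, hab | hba⟩
        · obtain ⟨-, h⟩ := spread_eq_true_iff.1 hab
          exact ⟨fun h' => hne (eq_of_coord_eq Λ hb.symm h'), Or.inl h⟩
        · obtain ⟨hq, h⟩ := spread_eq_true_iff.1 hba
          exact ⟨fun h' => hne (eq_of_coord_eq Λ hb.symm h'), Or.inr (by rwa [hq] at h)⟩
      · rintro ⟨a, ha⟩ ⟨b, hb⟩ h
        exact Subtype.ext (eq_of_coord_eq Λ (ha.trans hb.symm) h)

lemma reachable_spread {x : Γ ⧸ Λ → Λ × Λ → Bool} {a b : Γ} (hab : (a : Γ ⧸ Λ) = b)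
    (h : (graphOf (x a)).Reachable (coord Λ a) (coord Λ b)) :
    (graphOf (spread x)).Reachable a b := by
  let f : graphOf (x a) →g graphOf (spread x) :=
    ⟨fun v => (a : Γ ⧸ Λ).out * v, fun {v w} ⟨hne, hvw⟩ =>
      ⟨fun h => hne (Subtype.ext (mul_left_cancel h)), by rwa [spread_out_mul, spread_out_mul]⟩⟩
  have hfa : f (coord Λ a) = a := out_mul_coord Λ a
  have hfb : f (coord Λ b) = b := by
    show (a : Γ ⧸ Λ).out * coord Λ b = b
    rw [hab, out_mul_coord]
  simpa only [hfa, hfb] using h.map f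

end Cosets

section InducedMeasure

variable {Γ : Type*} [Group Γ] {Λ : Subgroup Γ} (μ : Measure (Λ × Λ → Bool))
  [IsProbabilityMeasure μ]

noncomputable def inducedMeasure : Measure (Γ × Γ → Bool) :=
  (Measure.infinitePi fun _ : Γ ⧸ Λ => μ).map spread

instance : IsProbabilityMeasure (inducedMeasure μ) :=
  Measure.isProbabilityMeasure_map measurable_spread.aemeasurable

lemma measurePreserving_dAct_inducedMeasure (hμ : ∀ c : Λ, MeasurePreserving (dAct c) μ μ)
    (γ : Γ) : MeasurePreserving (dAct γ) (inducedMeasure μ) (inducedMeasure μ) := by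
  have hmeas : Measurable (dAct (Γ := Γ) γ) := measurable_pi_lambda _ fun _ => measurable_pi_apply _
  have htwist := measurePreserving_infinitePi_comp_equiv μ (MulAction.toPerm γ⁻¹)
    (g := fun q => dAct (cocycle Λ γ q)⁻¹) fun q => hμ _
  refine ⟨hmeas, ?_⟩
  calc (inducedMeasure μ).map (dAct γ)
      = (Measure.infinitePi fun _ : Γ ⧸ Λ => μ).map (dAct γ ∘ spread) :=
        Measure.map_map hmeas measurable_spread
    _ = ((Measure.infinitePi fun _ : Γ ⧸ Λ => μ).map _).map spread := by
        rw [Measure.map_map measurable_spread htwist.measurable]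
        congr 1
        exact funext (dAct_spread γ)
    _ = inducedMeasure μ := by rw [htwist.map_eq]; rfl

instance [Countable Γ] : Countable (Γ ⧸ Λ) := QuotientGroup.mk_surjective.countable

variable [Countable Γ]

lemma ae_forall_isDirForest (hμ : μ {F | IsDirForest F} = 1) :
    ∀ᵐ x ∂(Measure.infinitePi fun _ : Γ ⧸ Λ => μ), ∀ q, IsDirForest (x q) :=
  ae_all_iff.2 fun q => (measurePreserving_eval_infinitePi _ q).quasiMeasurePreserving.ae
    ((ae_iff_prob_eq_one measurable_isDirForest).2 hμ)

lemma inducedMeasure_setOf_isDirForest (hμ : μ {F | IsDirForest F} = 1) :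
    inducedMeasure μ {F | IsDirForest F} = 1 := by
  rw [← ae_iff_prob_eq_one measurable_isDirForest, inducedMeasure,
    ae_map_iff measurable_spread.aemeasurable measurable_isDirForest.setOf]
  exact (ae_forall_isDirForest μ hμ).mono fun x hx => isDirForest_spread hx

lemma inducedMeasure_not_reachable_le (hμ : μ {F | IsDirForest F} = 1) {H : Finset Γ}
    {H' : Finset Λ} (hH : ∀ a ∈ H, a ∈ Λ) (hH' : ∀ a ∈ H, coord Λ a ∈ H') :
    inducedMeasure μ {F | IsDirForest F ∧ ¬ ∀ a ∈ H, ∀ b ∈ H, (graphOf F).Reachable a b} ≤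
      μ {F | IsDirForest F ∧ ¬ ∀ a ∈ H', ∀ b ∈ H', (graphOf F).Reachable a b} := by
  have hΛ : ∀ a ∈ H, (a : Γ ⧸ Λ) = ((1 : Γ) : Γ ⧸ Λ) := fun a ha =>
    QuotientGroup.eq.2 (by simpa using Λ.inv_mem (hH a ha))
  rw [inducedMeasure, Measure.map_apply measurable_spread
    (measurable_isDirForest_and_not_reachable H).setOf]
  refine (measure_mono_ae ?_).trans_eq <|
    (measurePreserving_eval_infinitePi _ ((1 : Γ) : Γ ⧸ Λ)).measure_preimage
      (measurable_isDirForest_and_not_reachable H').setOf.nullMeasurableSet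
  refine (ae_forall_isDirForest μ hμ).mono fun x hx ⟨_, hnot⟩ =>
    ⟨hx _, fun hall => hnot fun a ha b hb => reachable_spread ((hΛ a ha).trans (hΛ b hb).symm) ?_⟩
  rw [hΛ a ha]
  exact hall _ (hH' a ha) _ (hH' b hb)

end InducedMeasure

theorem ApproxTreeable.exists_measure_of_subset {Γ : Type*} [Group Γ] [Countable Γ]
    {Λ : Subgroup Γ} (hΛ : ApproxTreeable Λ) {H : Finset Γ} (hH : ∀ a ∈ H, a ∈ Λ) {ε : ℝ}
    (hε : 0 < ε) :
    ∃ μ : Measure ((Γ × Γ) → Bool), IsProbabilityMeasure μ ∧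
      (∀ γ : Γ, MeasurePreserving (dAct γ) μ μ) ∧
      μ {F | IsDirForest F} = 1 ∧
      μ {F | IsDirForest F ∧
        ¬ ∀ a ∈ H, ∀ b ∈ H, (graphOf F).Reachable a b} < ENNReal.ofReal ε := by
  classical
  obtain ⟨μ, _, hinv, hforest, hsmall⟩ := hΛ (H.image (coord Λ)) ε hε
  exact ⟨inducedMeasure μ, inferInstance, measurePreserving_dAct_inducedMeasure μ hinv,
    inducedMeasure_setOf_isDirForest μ hforest,
    (inducedMeasure_not_reachable_le μ hforest hH
      fun a ha => Finset.mem_image_of_mem _ ha).trans_lt hsmall⟩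

/-- If a countable group `Γ` is the union of an increasing sequence of
approximately treeable subgroups, then `Γ` is approximately treeable. -/
theorem stmt8 (Γ : Type*) [Group Γ] [Countable Γ]
    (Γseq : ℕ → Subgroup Γ)
    (hmono : ∀ n, Γseq n ≤ Γseq (n + 1))
    (hunion : ∀ g : Γ, ∃ n, g ∈ Γseq n)
    (htree : ∀ n, ApproxTreeable (Γseq n)) :
    ApproxTreeable Γ := by
  intro H ε hε
  obtain ⟨N, hN⟩ : ∃ N, ∀ a ∈ H, a ∈ Γseq N :=
    ⟨H.sup fun a => (hunion a).choose, fun a ha =>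
      monotone_nat_of_le_succ hmono (Finset.le_sup ha) (hunion a).choose_spec⟩
  exact (htree N).exists_measure_of_subset hN hε

end Stmt8
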